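/- arXiv:2201.12453 — 9 statements merged into one kernel-verified Lean document; each statement's English description precedes it below -/
import Mathlib

section
/- If x is a nonzero integer with ord_p(x) = ℓ and 0 ≤ ℓ < p, then the ℓ-th iterate of D_p applied to x is not divisible by p, and consequently D_p^{i}(x) = 0 for all i ≥ ℓ+1. -/
/-! The map `D_p` lowers the `p`-adic valuation `v ≥ 1` of `x` to `v - 1 + ord_p(v)`, since
`D_p(x) = (x/p)·v`. While `v < p` the term `ord_p(v)` vanishes, so `ℓ` steps bring the valuation
from `ℓ` down to `0` while keeping the iterate nonzero, and the next step multiplies by that `0`. -/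

def Dp (p : ℕ) (x : ℤ) : ℤ := (x / p) * padicValInt p x

lemma Dp_zero (p : ℕ) : Dp p 0 = 0 := by simp [Dp]

lemma iterate_Dp_zero (p n : ℕ) : (Dp p)^[n] 0 = 0 :=
  Function.iterate_fixed (Dp_zero p) n

lemma Dp_eq_zero_of_not_dvd {p : ℕ} {x : ℤ} (h : ¬ (p : ℤ) ∣ x) : Dp p x = 0 := by
  simp [Dp, padicValInt.eq_zero_of_not_dvd h]

lemma Int.ediv_ne_zero_of_dvd {a d : ℤ} (ha : a ≠ 0) (hd : d ∣ a) : a / d ≠ 0 := by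
  rintro h
  rw [← Int.ediv_mul_cancel hd, h, zero_mul] at ha
  exact ha rfl

section Prime

variable {p : ℕ} [Fact p.Prime] {x : ℤ}

lemma padicValInt_eq_padicValInt_ediv_add_one (hx : x ≠ 0) (hpx : (p : ℤ) ∣ x) :
    padicValInt p x = padicValInt p (x / p) + 1 := by
  rw [← padicValInt_mul_eq_succ _ (Int.ediv_ne_zero_of_dvd hx hpx), Int.ediv_mul_cancel hpx]

lemma Dp_ne_zero (hx : x ≠ 0) (hpx : (p : ℤ) ∣ x) : Dp p x ≠ 0 := by
  refine mul_ne_zero (Int.ediv_ne_zero_of_dvd hx hpx) ?_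
  rw [padicValInt_eq_padicValInt_ediv_add_one hx hpx]
  exact Int.natCast_ne_zero.mpr (Nat.succ_ne_zero _)

lemma padicValInt_Dp (hx : x ≠ 0) (hpx : (p : ℤ) ∣ x) :
    padicValInt p (Dp p x) = padicValInt p x - 1 + padicValNat p (padicValInt p x) := by
  have hv := padicValInt_eq_padicValInt_ediv_add_one hx hpx
  have hv0 : ((padicValInt p x : ℕ) : ℤ) ≠ 0 := by rw [hv]; exact Int.natCast_ne_zero.mpr (by omega)
  rw [Dp, padicValInt.mul (Int.ediv_ne_zero_of_dvd hx hpx) hv0, padicValInt.of_nat, hv]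
  omega

lemma iterate_Dp_ne_zero_and_padicValInt (hx : x ≠ 0) (hlt : padicValInt p x < p) {k : ℕ}
    (hk : k ≤ padicValInt p x) :
    (Dp p)^[k] x ≠ 0 ∧ padicValInt p ((Dp p)^[k] x) = padicValInt p x - k := by
  induction k with
  | zero => exact ⟨hx, rfl⟩
  | succ k ih =>
    obtain ⟨hne, hval⟩ := ih (by omega)
    have hdvd : (p : ℤ) ∣ (Dp p)^[k] x := by
      by_contra h
      rw [padicValInt.eq_zero_of_not_dvd h] at hval
      omega
    have hcoprime : padicValNat p (padicValInt p x - k) = 0 :=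
      padicValNat.eq_zero_of_not_dvd (Nat.not_dvd_of_pos_of_lt (by omega) (by omega))
    rw [Function.iterate_succ_apply']
    refine ⟨Dp_ne_zero hne hdvd, ?_⟩
    rw [padicValInt_Dp hne hdvd, hval, hcoprime]
    omega

end Prime

theorem small_ord_eventually_zero (p : ℕ) (hp : p.Prime) (x : ℤ) (hx : x ≠ 0)
    (ℓ : ℕ) (hℓ : padicValInt p x = ℓ) (hℓp : ℓ < p) :
    ¬ (p : ℤ) ∣ (Dp p)^[ℓ] x ∧ ∀ i, ℓ + 1 ≤ i → (Dp p)^[i] x = 0 := by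
  have : Fact p.Prime := ⟨hp⟩
  subst hℓ
  obtain ⟨hne, hval⟩ := iterate_Dp_ne_zero_and_padicValInt hx hℓp le_rfl
  have hndvd : ¬ (p : ℤ) ∣ (Dp p)^[padicValInt p x] x := by
    rw [Nat.sub_self, padicValInt.eq_zero_iff] at hval
    simpa [hp.ne_one, hne] using hval
  refine ⟨hndvd, fun i hi => ?_⟩
  obtain ⟨j, rfl⟩ := Nat.exists_eq_add_of_le' hi
  rw [Function.iterate_add_apply, Function.iterate_succ_apply', Dp_eq_zero_of_not_dvd hndvd,
    iterate_Dp_zero]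
end

section
/- Let x = a·p^{b·p^k} be a nonzero integer with p ∤ ab and k ≥ 1, and set k' = ((k−1) mod p) + 1. Then for every i with 1 ≤ i ≤ k', one has D_p^{i}(x) = a·b·(∏_{j=1}^{i-1}(b·p^k + k − j))·p^{b·p^k + k − i}, and in particular ord_p(D_p^{i}(x)) = b·p^k + k − i. -/
/-!
For `c` prime to `p` one has `D_p (c p^(n+1)) = c (n+1) p^n`, so `D_p` lowers the exponent by one
and multiplies the unit part by the old exponent. The first step turns `a p^(b p^k)` into
`a b p^(b p^k + k - 1)`, and the factors produced afterwards, `b p^k + k - j` for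
`1 ≤ j < k' = (k - 1) % p + 1`, are all prime to `p` because `k - j ≢ 0 (mod p)` in that range;
hence the unit part stays prime to `p` and the pattern persists.
-/

open Finset

theorem Finset.prod_Icc_one_sub_eq_prod_range {M : Type*} [CommMonoid M] (f : ℕ → M) (n m : ℕ) :
    ∏ j ∈ Icc 1 m, f (n - j) = ∏ j ∈ range m, f (n - 1 - j) := by
  rw [← Ico_add_one_right_eq_Icc, prod_Ico_eq_prod_range, Nat.add_sub_cancel]
  simp only [Nat.sub_add_eq]

theorem Nat.not_dvd_sub_of_le_mod {p k j : ℕ} (hp : 0 < p) (hj : 1 ≤ j)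
    (hjk : j ≤ (k - 1) % p) : ¬ p ∣ k - j := by
  intro h
  -- `k - j` exceeds the multiple `k - 1 - (k - 1) % p` of `p` by `(k - 1) % p + 1 - j ∈ (0, p)`.
  have hr_lt := Nat.mod_lt (k - 1) hp
  have hr_le := Nat.mod_le (k - 1) p
  have hdiff : p ∣ (k - j) - (k - 1 - (k - 1) % p) := Nat.dvd_sub h (Nat.dvd_sub_mod (k - 1))
  have := Nat.le_of_dvd (by omega) hdiff
  omega

theorem Nat.not_dvd_mul_pow_add_sub {p b k j : ℕ} (hp : 0 < p) (hj : 1 ≤ j)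
    (hjk : j ≤ (k - 1) % p) : ¬ p ∣ b * p ^ k + k - j := by
  have hjk' : j < k := by have := Nat.mod_le (k - 1) p; omega
  rw [Nat.add_sub_assoc (by omega),
    Nat.dvd_add_right (dvd_mul_of_dvd_right (dvd_pow_self p (by omega)) b)]
  exact Nat.not_dvd_sub_of_le_mod hp hj hjk

section Dp

variable {p : ℕ} [Fact p.Prime]

theorem padicValInt_mul_pow_of_not_dvd {c : ℤ} (hc : ¬ (p : ℤ) ∣ c) (n : ℕ) :
    padicValInt p (c * (p : ℤ) ^ n) = n := by
  induction n with
  | zero => simpa using padicValInt.eq_zero_of_not_dvd hc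
  | succ n ih =>
    have hc0 : c ≠ 0 := by rintro rfl; exact hc (dvd_zero _)
    have hp0 : (p : ℤ) ≠ 0 := by exact_mod_cast (Fact.out : p.Prime).ne_zero
    rw [pow_succ, ← mul_assoc, padicValInt_mul_eq_succ _ (mul_ne_zero hc0 (pow_ne_zero n hp0)), ih]

theorem Dp_mul_pow_succ {c : ℤ} (hc : ¬ (p : ℤ) ∣ c) (n : ℕ) :
    Dp p (c * (p : ℤ) ^ (n + 1)) = c * ((n + 1 : ℕ) : ℤ) * (p : ℤ) ^ n := by
  have hp0 : (p : ℤ) ≠ 0 := by exact_mod_cast (Fact.out : p.Prime).ne_zero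
  rw [Dp, padicValInt_mul_pow_of_not_dvd hc, pow_succ, ← mul_assoc,
    Int.mul_ediv_cancel _ hp0]
  ring

theorem not_dvd_mul_prod_of_forall_not_dvd {ι : Type*} {c : ℤ} {s : Finset ι} {f : ι → ℕ}
    (hc : ¬ (p : ℤ) ∣ c) (hf : ∀ j ∈ s, ¬ p ∣ f j) :
    ¬ (p : ℤ) ∣ c * ∏ j ∈ s, (f j : ℤ) := by
  have hpZ : Prime (p : ℤ) := Nat.prime_iff_prime_int.mp Fact.out
  rw [hpZ.dvd_mul, hpZ.dvd_finsetProd_iff]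
  rintro (h | ⟨j, hj, hdvd⟩)
  · exact hc h
  · exact hf j hj (Int.natCast_dvd_natCast.mp hdvd)

theorem Dp_iterate_mul_pow {c : ℤ} (hc : ¬ (p : ℤ) ∣ c) {n i : ℕ} (hi : i ≤ n)
    (hfac : ∀ j < i, ¬ p ∣ n - j) :
    (Dp p)^[i] (c * (p : ℤ) ^ n) = (c * ∏ j ∈ range i, ((n - j : ℕ) : ℤ)) * (p : ℤ) ^ (n - i) := by
  induction i with
  | zero => simp
  | succ i ih =>
    have hcoef : ¬ (p : ℤ) ∣ c * ∏ j ∈ range i, ((n - j : ℕ) : ℤ) :=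
      not_dvd_mul_prod_of_forall_not_dvd hc fun j hj ↦ hfac j (by simp at hj; omega)
    have hexp : n - i = n - (i + 1) + 1 := by omega
    rw [Function.iterate_succ_apply', ih (by omega) fun j hj ↦ hfac j (by omega), hexp,
      Dp_mul_pow_succ hcoef, ← hexp, prod_range_succ, mul_assoc c]

theorem Dp_mul_pow_mul_pow {a : ℤ} (ha : ¬ (p : ℤ) ∣ a) {b : ℕ} (hb : b ≠ 0) (k : ℕ) :
    Dp p (a * (p : ℤ) ^ (b * p ^ k)) = a * b * (p : ℤ) ^ (b * p ^ k + k - 1) := by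
  obtain ⟨n, hn⟩ : ∃ n, b * p ^ k = n + 1 :=
    Nat.exists_eq_succ_of_ne_zero (mul_ne_zero hb (pow_ne_zero k (Fact.out : p.Prime).ne_zero))
  rw [hn, Dp_mul_pow_succ ha, ← hn, show b * p ^ k + k - 1 = k + n by omega, pow_add]
  push_cast
  ring

end Dp

theorem segment_formula_general (p : ℕ) (hp : p.Prime) (a : ℤ) (b k : ℕ)
    (ha : ¬ (p : ℤ) ∣ a) (hbp : ¬ p ∣ b) :
    ∀ i, 1 ≤ i → i ≤ (k - 1) % p + 1 →
      (Dp p)^[i] (a * (p : ℤ) ^ (b * p ^ k)) =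
        a * b * (∏ j ∈ Finset.Icc 1 (i - 1), ((b * p ^ k + k - j : ℕ) : ℤ)) *
          (p : ℤ) ^ (b * p ^ k + k - i) ∧
      padicValInt p ((Dp p)^[i] (a * (p : ℤ) ^ (b * p ^ k))) = b * p ^ k + k - i := by
  have : Fact p.Prime := ⟨hp⟩
  intro i hi hik
  obtain ⟨m, rfl⟩ : ∃ m, i = m + 1 := ⟨i - 1, by omega⟩
  have hmk := Nat.mod_le (k - 1) p
  have hb : b ≠ 0 := by rintro rfl; exact hbp (dvd_zero p)
  have hab : ¬ (p : ℤ) ∣ a * b := by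
    rw [(Nat.prime_iff_prime_int.mp hp).dvd_mul, Int.natCast_dvd_natCast]
    tauto
  have hfac : ∀ j < m, ¬ p ∣ b * p ^ k + k - 1 - j := fun j hj ↦ by
    rw [← Nat.sub_add_eq, Nat.add_comm 1 j]
    exact Nat.not_dvd_mul_pow_add_sub hp.pos (by omega) (by omega)
  have hexp : b * p ^ k + k - 1 - m = b * p ^ k + k - (m + 1) := by omega
  rw [Function.iterate_succ_apply, Dp_mul_pow_mul_pow ha hb,
    Dp_iterate_mul_pow hab (by omega) hfac, hexp, padicValInt_mul_pow_of_not_dvd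
      (not_dvd_mul_prod_of_forall_not_dvd hab fun j hj ↦ hfac j (by simpa using hj)),
    Nat.add_sub_cancel, prod_Icc_one_sub_eq_prod_range (Nat.cast : ℕ → ℤ)]
  exact ⟨by ring, rfl⟩

theorem segment_formula (p : ℕ) (hp : p.Prime) (a : ℤ) (b k : ℕ)
    (ha : ¬ (p : ℤ) ∣ a) (ha0 : a ≠ 0) (hb : 0 < b) (hbp : ¬ p ∣ b) (hk : 1 ≤ k) :
    ∀ i, 1 ≤ i → i ≤ (k - 1) % p + 1 →
      (Dp p)^[i] (a * (p : ℤ) ^ (b * p ^ k)) =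
        a * b * (∏ j ∈ Finset.Icc 1 (i - 1), ((b * p ^ k + k - j : ℕ) : ℤ)) *
          (p : ℤ) ^ (b * p ^ k + k - i) ∧
      padicValInt p ((Dp p)^[i] (a * (p : ℤ) ^ (b * p ^ k))) = b * p ^ k + k - i :=
  segment_formula_general p hp a b k ha hbp
end

section
/- For every integer x, the sequence ord_p(D_p^i(x)) (with the convention ord_p(0) = +∞) is eventually periodic with period at most p. -/
/-- `ord_p` with the convention `ord_p(0) = +∞`, valued in `ℕ∞`. -/
def ordInf (p : ℕ) (x : ℤ) : ℕ∞ := if x = 0 then ⊤ else (padicValInt p x : ℕ∞)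

/-!
While `D_p^i(x) ≠ 0`, writing `x = p^v u` with `p ∤ u` gives `D_p(x) = p^(v-1) u v`, so the
valuations follow the map `k ↦ k - 1 + ord_p(k)` on `ℕ`; once the sequence hits `0` it stays there.
That map keeps every `k < p^n` below `p^n`, so each orbit is eventually periodic. Let `M` be the
least value of a cycle and `v = ord_p(M)`. Minimality forces `p ∣ M`, and since `[M + p, ∞)` is
invariant, the jump `M ↦ M + v - 1` must stay below `M + p`. From `M + v - 1` the orbit then walks
down through non-multiples of `p` back to `M`, so the cycle has length `v ≤ p`.
-/

open Function Set

theorem Function.IsPeriodicPt.iterate_add_eq_of_le {α : Type*} {f : α → α} {x : α} {m L i : ℕ}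
    (h : IsPeriodicPt f L (f^[m] x)) (hi : m ≤ i) : f^[i + L] x = f^[i] x := by
  obtain ⟨j, rfl⟩ := Nat.exists_eq_add_of_le hi
  rw [add_comm, iterate_add_apply, add_comm m j, iterate_add_apply]
  exact (h.apply_iterate j).eq

theorem Function.exists_iterate_mem_periodicPts_of_forall_mem {α : Type*} {f : α → α} {x : α}
    {s : Set α} (hs : s.Finite) (hx : ∀ n, f^[n] x ∈ s) : ∃ m, f^[m] x ∈ periodicPts f := by
  obtain ⟨a, b, hab, heq⟩ := hs.exists_lt_map_eq_of_forall_mem hx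
  refine ⟨a, mem_periodicPts.2 ⟨b - a, Nat.sub_pos_of_lt hab, ?_⟩⟩
  rw [IsPeriodicPt, IsFixedPt, ← iterate_add_apply, Nat.sub_add_cancel hab.le, heq]

def ordStep (p k : ℕ) : ℕ := k - 1 + padicValNat p k

section ordStep

variable {p : ℕ}

theorem mapsTo_ordStep_Iio_pow (hp : 1 < p) (n : ℕ) :
    MapsTo (ordStep p) (Iio (p ^ n)) (Iio (p ^ n)) := by
  intro k (hk : k < p ^ n)
  show k - 1 + padicValNat p k < p ^ n
  rcases Nat.eq_zero_or_pos k with rfl | hk0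
  · simpa using hk
  set w := padicValNat p k
  have hwk : p ^ w ∣ k := pow_padicValNat_dvd
  have hwn : w ≤ n :=
    (Nat.pow_lt_pow_iff_right hp).1 ((Nat.le_of_dvd hk0 hwk).trans_lt hk) |>.le
  -- `p ^ w` divides both `k` and `p ^ n`, so `k + p ^ w ≤ p ^ n`.
  have hgap : p ^ w ≤ p ^ n - k :=
    Nat.le_of_dvd (Nat.sub_pos_of_lt hk) (Nat.dvd_sub (pow_dvd_pow p hwn) hwk)
  have := Nat.lt_pow_self (n := w) hp
  omega

theorem iterate_ordStep_add_of_dvd {M j : ℕ} (hM : p ∣ M) (hj : j < p) :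
    (ordStep p)^[j] (M + j) = M := by
  induction j with
  | zero => rfl
  | succ j ih =>
    have hndvd : ¬p ∣ M + (j + 1) := by
      rw [Nat.dvd_add_right hM]
      exact Nat.not_dvd_of_pos_of_lt j.succ_pos hj
    rw [iterate_succ_apply, ordStep, padicValNat.eq_zero_of_not_dvd hndvd]
    simpa using ih (by omega)

variable [Fact p.Prime]

theorem mapsTo_ordStep_Ici {M : ℕ} (hM : p ∣ M) : MapsTo (ordStep p) (Ici M) (Ici M) := by
  intro c (hc : M ≤ c)
  show M ≤ c - 1 + padicValNat p c
  rcases hc.lt_or_eq with hlt | rfl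
  · omega
  rcases Nat.eq_zero_or_pos M with rfl | hM0
  · exact Nat.zero_le _
  have := one_le_padicValNat_of_dvd hM0.ne' hM
  omega

theorem isPeriodicPt_ordStep_padicValNat_of_forall_le {M T : ℕ} (hM : M ≠ 0) (hT : 0 < T)
    (hper : IsPeriodicPt (ordStep p) T M) (hmin : ∀ n, M ≤ (ordStep p)^[n] M) :
    1 ≤ padicValNat p M ∧ padicValNat p M ≤ p ∧
      IsPeriodicPt (ordStep p) (padicValNat p M) M := by
  set v := padicValNat p M
  have hle : M ≤ M - 1 + v := hmin 1
  have hv : 1 ≤ v := by omega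
  have hstep : ordStep p M = M + (v - 1) := by
    show M - 1 + v = _
    omega
  have hpM : p ∣ M := dvd_of_one_le_padicValNat hv
  have hvp : v ≤ p := by
    by_contra! hpv
    -- After the jump the orbit stays in `[M + p, ∞)`, so it could never return to `M`.
    have hfar : M + p ≤ (ordStep p)^[T - 1] (ordStep p M) :=
      (mapsTo_ordStep_Ici (dvd_add hpM dvd_rfl)).iterate _ (show M + p ≤ ordStep p M by omega)
    rw [← iterate_succ_apply, show (T - 1).succ = T by omega, hper.eq] at hfar
    have := (Fact.out : p.Prime).pos
    omega
  refine ⟨hv, hvp, ?_⟩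
  rw [IsPeriodicPt, IsFixedPt, ← Nat.sub_add_cancel hv, iterate_succ_apply, hstep]
  exact iterate_ordStep_add_of_dvd hpM (by omega)

theorem exists_isPeriodicPt_iterate_ordStep (k : ℕ) :
    ∃ m L, 1 ≤ L ∧ L ≤ p ∧ IsPeriodicPt (ordStep p) L ((ordStep p)^[m] k) := by
  have hp : p.Prime := Fact.out
  obtain ⟨m, hm⟩ := exists_iterate_mem_periodicPts_of_forall_mem (finite_Iio (p ^ k))
    fun n => (mapsTo_ordStep_Iio_pow hp.one_lt k).iterate n (Nat.lt_pow_self hp.one_lt)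
  obtain ⟨T, hT, hper⟩ := mem_periodicPts.1 hm
  set x := (ordStep p)^[m] k
  set n₀ := Function.argmin fun n : ℕ => (ordStep p)^[n] x
  have hmin : ∀ n, (ordStep p)^[n₀] x ≤ (ordStep p)^[n] ((ordStep p)^[n₀] x) := fun n => by
    simpa only [iterate_add_apply] using argmin_le (fun n : ℕ => (ordStep p)^[n] x) (n + n₀)
  have hx : (ordStep p)^[n₀ + m] k = (ordStep p)^[n₀] x := iterate_add_apply _ _ _ _
  rcases eq_or_ne ((ordStep p)^[n₀] x) 0 with h0 | h0
  · refine ⟨n₀ + m, 1, le_rfl, hp.one_lt.le, ?_⟩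
    rw [hx, h0]
    exact IsFixedPt.isPeriodicPt (by simp [IsFixedPt, ordStep]) 1
  · obtain ⟨hv, hvp, hperv⟩ :=
      isPeriodicPt_ordStep_padicValNat_of_forall_le h0 hT (hper.apply_iterate n₀) hmin
    exact ⟨n₀ + m, _, hv, hvp, hx ▸ hperv⟩

end ordStep

section Dp

variable {p : ℕ} [Fact p.Prime]

theorem padicValInt_Dp_s4 (y : ℤ) : padicValInt p (Dp p y) = ordStep p (padicValInt p y) := by
  rcases Nat.eq_zero_or_pos (padicValInt p y) with h0 | hpos
  · simp [Dp, h0, ordStep]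
  have hy : y ≠ 0 := by
    rintro rfl
    simp at hpos
  obtain ⟨z, rfl⟩ : (p : ℤ) ∣ y := by simpa using (padicValInt_dvd_iff 1 y).2 (Or.inr hpos)
  have hp0 : (p : ℤ) ≠ 0 := by exact_mod_cast (Fact.out : p.Prime).ne_zero
  have hz : z ≠ 0 := right_ne_zero_of_mul hy
  have hv : padicValInt p (p * z) = padicValInt p z + 1 := by
    rw [mul_comm]
    exact padicValInt_mul_eq_succ z hz
  rw [Dp, Int.mul_ediv_cancel_left _ hp0, padicValInt.mul hz (by exact_mod_cast hpos.ne'),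
    padicValInt.of_nat, ordStep, hv, Nat.add_sub_cancel]

theorem padicValInt_iterate_Dp (n : ℕ) (y : ℤ) :
    padicValInt p ((Dp p)^[n] y) = (ordStep p)^[n] (padicValInt p y) :=
  (Semiconj.iterate_right (f := padicValInt p) padicValInt_Dp_s4 n) y

end Dp

theorem ord_seq_eventually_periodic (p : ℕ) (hp : p.Prime) (x : ℤ) :
    ∃ L : ℕ, 1 ≤ L ∧ L ≤ p ∧ ∃ m : ℕ, 1 ≤ m ∧
      ∀ i, m ≤ i → ordInf p ((Dp p)^[i + L] x) = ordInf p ((Dp p)^[i] x) := by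
  have := Fact.mk hp
  by_cases hzero : ∃ n, (Dp p)^[n] x = 0
  · obtain ⟨n, hn⟩ := hzero
    have hfix : IsPeriodicPt (Dp p) 1 ((Dp p)^[n] x) := by
      rw [hn]
      exact IsFixedPt.isPeriodicPt (by simp [IsFixedPt, Dp]) 1
    exact ⟨1, le_rfl, hp.one_lt.le, n + 1, by omega, fun i hi => by
      rw [hfix.iterate_add_eq_of_le (by omega)]⟩
  · push Not at hzero
    obtain ⟨m, L, hL, hLp, hper⟩ := exists_isPeriodicPt_iterate_ordStep (p := p) (padicValInt p x)
    refine ⟨L, hL, hLp, m + 1, by omega, fun i hi => ?_⟩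
    simp only [ordInf, if_neg (hzero _), padicValInt_iterate_Dp,
      hper.iterate_add_eq_of_le (by omega : m ≤ i)]
end

section
/- For every integer x, exactly one of the following holds: (i) D_p^i(x) = 0 for all sufficiently large i; (ii) there exists an integer a coprime to p such that D_p^i(x) = a·p^p for all sufficiently large i; (iii) |D_p^i(x)| tends to infinity as i → ∞. -/
/-!
Write `v` for the `p`-adic valuation. If `y = p q` with `q ≠ 0`, then `D_p(y) = q (v(q) + 1)`.
So when `0 < v(y) < p` the factor `v(y)` is prime to `p`, the valuation drops by one, and the
orbit reaches `0` after `v(y) + 1` steps; when `v(y) = p`, `y` is a fixed point and equals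
`a p^p` with `p ∤ a`; when `v(y) > p`, `|D_p(y)| = |q| v(y) > |q| p = |y|`. An orbit avoiding the
first two regimes therefore stays in the third and its absolute values increase strictly.
-/

open Filter Function

lemma Int.tendsto_atTop_of_strictMono {u : ℕ → ℤ} (hu : StrictMono u) :
    Tendsto u atTop atTop := by
  have hle : ∀ n : ℕ, (n : ℤ) + u 0 ≤ u n := by
    intro n
    induction n with
    | zero => simp
    | succ n ih => have := hu (Nat.lt_add_one n); push_cast; omega
  exact tendsto_atTop_mono hle (tendsto_atTop_add_const_right _ _ tendsto_natCast_atTop_atTop)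

lemma not_tendsto_abs_of_eventually_eq {u : ℕ → ℤ} {c : ℤ} (h : ∃ N, ∀ i, N ≤ i → u i = c) :
    ¬ Tendsto (fun i => |u i|) atTop atTop := by
  obtain ⟨N, hN⟩ := h
  intro ht
  refine not_tendsto_const_atTop |c| atTop (ht.congr' ?_)
  filter_upwards [eventually_ge_atTop N] with i hi
  rw [hN i hi]

lemma iterate_eq_of_isFixedPt {α : Type*} {f : α → α} {x c : α} {i j : ℕ}
    (hc : IsFixedPt f c) (hi : f^[i] x = c) (hij : i ≤ j) : f^[j] x = c := by
  obtain ⟨k, rfl⟩ := Nat.exists_eq_add_of_le hij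
  rw [add_comm, iterate_add_apply, hi, (hc.iterate k).eq]

lemma exists_isCoprime_eq_mul_pow_padicValInt {p : ℕ} (hp : p.Prime) {c : ℤ} (hc : c ≠ 0) :
    ∃ a : ℤ, IsCoprime a p ∧ c = a * (p : ℤ) ^ padicValInt p c := by
  have : Fact p.Prime := ⟨hp⟩
  obtain ⟨a, ha⟩ := padicValInt_dvd (p := p) c
  refine ⟨a, ?_, ha.trans (mul_comm _ _)⟩
  refine ((Nat.prime_iff_prime_int.mp hp).coprime_iff_not_dvd.mpr ?_).symm
  rintro ⟨b, rfl⟩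
  have : (p : ℤ) ^ (padicValInt p c + 1) ∣ c := ⟨b, by rw [pow_succ]; linear_combination ha⟩
  rw [padicValInt_dvd_iff] at this
  omega

namespace Dp

variable {p : ℕ}

@[simp] lemma zero : Dp p 0 = 0 := by simp [Dp]

lemma eq_zero_of_padicValInt_eq_zero {y : ℤ} (h : padicValInt p y = 0) : Dp p y = 0 := by
  simp [Dp, h]

lemma isFixedPt_of_padicValInt_eq (hp : p.Prime) {y : ℤ} (h : padicValInt p y = p) :
    IsFixedPt (Dp p) y := by
  have hdvd : (p : ℤ) ∣ y :=
    (dvd_pow_self (p : ℤ) (by rw [h]; exact hp.ne_zero)).trans (padicValInt_dvd y)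
  rw [IsFixedPt, Dp, h, Int.ediv_mul_cancel hdvd]

lemma natCast_mul (hp : p.Prime) {q : ℤ} (hq : q ≠ 0) :
    Dp p (p * q) = q * (padicValInt p q + 1) := by
  have : Fact p.Prime := ⟨hp⟩
  rw [Dp, Int.mul_ediv_cancel_left q (by exact_mod_cast hp.ne_zero), mul_comm (p : ℤ),
    padicValInt_mul_eq_succ q hq]
  push_cast; rfl

lemma exists_eq_natCast_mul (hp : p.Prime) {y : ℤ} (hy : 0 < padicValInt p y) :
    ∃ q ≠ 0, y = p * q ∧ padicValInt p y = padicValInt p q + 1 := by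
  have : Fact p.Prime := ⟨hp⟩
  have hy0 : y ≠ 0 := by rintro rfl; simp at hy
  obtain ⟨q, rfl⟩ : (p : ℤ) ∣ y := (dvd_pow_self (p : ℤ) hy.ne').trans (padicValInt_dvd y)
  have hq : q ≠ 0 := right_ne_zero_of_mul hy0
  exact ⟨q, hq, rfl, by rw [mul_comm]; exact padicValInt_mul_eq_succ q hq⟩

lemma iterate_eq_zero_of_padicValInt_lt (hp : p.Prime) {y : ℤ} (hy : padicValInt p y < p) :
    (Dp p)^[padicValInt p y + 1] y = 0 := by
  have : Fact p.Prime := ⟨hp⟩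
  induction hv : padicValInt p y generalizing y with
  | zero => simpa using eq_zero_of_padicValInt_eq_zero hv
  | succ n ih =>
    obtain ⟨q, hq, rfl, hvq⟩ := exists_eq_natCast_mul hp (y := y) (by omega)
    have hn : padicValInt p q = n := by omega
    have hvn : padicValInt p ((n + 1 : ℕ) : ℤ) = 0 := by
      rw [padicValInt.of_nat]
      exact padicValNat.eq_zero_of_not_dvd (Nat.not_dvd_of_pos_of_lt n.succ_pos (by omega))
    have hD : Dp p (p * q) = q * ((n + 1 : ℕ) : ℤ) := by rw [natCast_mul hp hq, hn]; push_cast; rfl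
    have hvD : padicValInt p (q * ((n + 1 : ℕ) : ℤ)) = n := by
      rw [padicValInt.mul hq (by positivity), hn, hvn]; rfl
    rw [iterate_succ_apply, hD]
    exact ih (by omega) hvD

lemma abs_lt_abs (hp : p.Prime) {y : ℤ} (hy : p < padicValInt p y) : |y| < |Dp p y| := by
  obtain ⟨q, hq, rfl, hvq⟩ := exists_eq_natCast_mul hp (hp.pos.trans hy)
  rw [natCast_mul hp hq, abs_mul, abs_mul, Int.abs_natCast, mul_comm (p : ℤ)]
  exact mul_lt_mul_of_pos_left (by rw [abs_of_pos (by positivity)]; omega) (abs_pos.mpr hq)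

lemma orbit_cases (hp : p.Prime) (x : ℤ) :
    (∃ i, (Dp p)^[i] x = 0) ∨ (∃ i, padicValInt p ((Dp p)^[i] x) = p) ∨
      StrictMono fun i => |(Dp p)^[i] x| := by
  by_cases hzero : ∃ i, (Dp p)^[i] x = 0
  · exact Or.inl hzero
  by_cases hfix : ∃ i, padicValInt p ((Dp p)^[i] x) = p
  · exact Or.inr (Or.inl hfix)
  push Not at hzero hfix
  refine Or.inr (Or.inr (strictMono_nat_of_lt_succ fun i => ?_))
  have hgt : p < padicValInt p ((Dp p)^[i] x) := by
    refine lt_of_le_of_ne (not_lt.mp fun hlt => hzero (padicValInt p ((Dp p)^[i] x) + 1 + i) ?_) (hfix i).symm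
    rw [iterate_add_apply]
    exact iterate_eq_zero_of_padicValInt_lt hp hlt
  rw [iterate_succ_apply']
  exact abs_lt_abs hp hgt

end Dp

theorem trichotomy (p : ℕ) (hp : p.Prime) (x : ℤ) :
    ((∃ N, ∀ i, N ≤ i → (Dp p)^[i] x = 0) ∧
      ¬ (∃ a : ℤ, IsCoprime a (p : ℤ) ∧ ∃ N, ∀ i, N ≤ i → (Dp p)^[i] x = a * (p : ℤ) ^ p) ∧
      ¬ Filter.Tendsto (fun i => |(Dp p)^[i] x|) Filter.atTop Filter.atTop) ∨
    (¬ (∃ N, ∀ i, N ≤ i → (Dp p)^[i] x = 0) ∧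
      (∃ a : ℤ, IsCoprime a (p : ℤ) ∧ ∃ N, ∀ i, N ≤ i → (Dp p)^[i] x = a * (p : ℤ) ^ p) ∧
      ¬ Filter.Tendsto (fun i => |(Dp p)^[i] x|) Filter.atTop Filter.atTop) ∨
    (¬ (∃ N, ∀ i, N ≤ i → (Dp p)^[i] x = 0) ∧
      ¬ (∃ a : ℤ, IsCoprime a (p : ℤ) ∧ ∃ N, ∀ i, N ≤ i → (Dp p)^[i] x = a * (p : ℤ) ^ p) ∧
      Filter.Tendsto (fun i => |(Dp p)^[i] x|) Filter.atTop Filter.atTop) := by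
  set P := ∃ N, ∀ i, N ≤ i → (Dp p)^[i] x = 0
  set Q := ∃ a : ℤ, IsCoprime a (p : ℤ) ∧ ∃ N, ∀ i, N ≤ i → (Dp p)^[i] x = a * (p : ℤ) ^ p
  set R := Tendsto (fun i => |(Dp p)^[i] x|) atTop atTop
  have hPQ : ¬ (P ∧ Q) := by
    rintro ⟨⟨N, hN⟩, a, ha, M, hM⟩
    have h0 : a * (p : ℤ) ^ p = 0 := (hM _ (le_max_right N M)).symm.trans (hN _ (le_max_left N M))
    obtain rfl : a = 0 := by simpa [hp.ne_zero] using h0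
    exact (Nat.prime_iff_prime_int.mp hp).not_isUnit (isCoprime_zero_left.mp ha)
  have hPR : P → ¬ R := not_tendsto_abs_of_eventually_eq
  have hQR : Q → ¬ R := fun ⟨_, _, hN⟩ => not_tendsto_abs_of_eventually_eq hN
  have hPQR : P ∨ Q ∨ R := by
    rcases Dp.orbit_cases hp x with ⟨i, hi⟩ | ⟨i, hi⟩ | hmono
    · exact Or.inl ⟨i, fun j hj => iterate_eq_of_isFixedPt Dp.zero hi hj⟩
    · have hc : (Dp p)^[i] x ≠ 0 := fun h => hp.ne_zero (by rw [← hi, h, padicValInt.zero])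
      obtain ⟨a, ha, hca⟩ := exists_isCoprime_eq_mul_pow_padicValInt hp hc
      rw [hi] at hca
      exact Or.inr (Or.inl ⟨a, ha, i, fun j hj =>
        (iterate_eq_of_isFixedPt (Dp.isFixedPt_of_padicValInt_eq hp hi) rfl hj).trans hca⟩)
    · exact Or.inr (Or.inr (Int.tendsto_atTop_of_strictMono hmono))
  clear_value P Q R
  tauto
end

section
/- For every integer N ≥ 1 there exists an integer x such that ord_p(x) < ord_p(D_p(x)) < ord_p(D_p^2(x)) < ⋯ < ord_p(D_p^N(x)), with all these values finite. -/
def valStep (p a : ℕ) : ℕ := a - 1 + padicValNat p a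

def tower (p : ℕ) : ℕ → ℕ
  | 0 => 2
  | k + 1 => p ^ tower p k + 1

lemma lt_valStep {p a : ℕ} (h : 2 ≤ padicValNat p a) : a < valStep p a := by
  have ha : a ≠ 0 := by rintro rfl; simp at h
  unfold valStep
  omega

variable {p : ℕ} [hp : Fact p.Prime]

lemma padicValInt_Dp_s7 {x : ℤ} (hx : x ≠ 0) (hv : padicValInt p x ≠ 0) :
    Dp p x ≠ 0 ∧ padicValInt p (Dp p x) = valStep p (padicValInt p x) := by
  have hdvd : (p : ℤ) ∣ x := by
    simpa using (padicValInt_dvd_iff (p := p) 1 x).mpr (Or.inr (Nat.one_le_iff_ne_zero.mpr hv))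
  have hxp : x / p * p = x := Int.ediv_mul_cancel hdvd
  have hq : x / p ≠ 0 := by
    rintro h
    rw [h, zero_mul] at hxp
    exact hx hxp.symm
  have hvq : padicValInt p (x / p) = padicValInt p x - 1 := by
    have := padicValInt_mul_eq_succ (p := p) (x / p) hq
    rw [hxp] at this
    omega
  have hv' : (padicValInt p x : ℤ) ≠ 0 := by exact_mod_cast hv
  refine ⟨mul_ne_zero hq hv', ?_⟩
  rw [Dp, padicValInt.mul hq hv', hvq, padicValInt.of_nat, valStep]

lemma iterate_Dp {x : ℤ} (hx : x ≠ 0) {i : ℕ}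
    (h : ∀ j < i, (valStep p)^[j] (padicValInt p x) ≠ 0) :
    (Dp p)^[i] x ≠ 0 ∧ padicValInt p ((Dp p)^[i] x) = (valStep p)^[i] (padicValInt p x) := by
  induction i with
  | zero => exact ⟨hx, rfl⟩
  | succ i ih =>
    obtain ⟨hne, hval⟩ := ih fun j hj => h j (by omega)
    rw [Function.iterate_succ_apply', Function.iterate_succ_apply', ← hval]
    exact padicValInt_Dp_s7 hne (hval ▸ h i i.lt_succ_self)

lemma padicValNat_pow_mul_one_add (t m : ℕ) : padicValNat p (p ^ t * (1 + p * m)) = t := by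
  have hcop : ¬ p ∣ 1 + p * m := fun h =>
    hp.out.one_lt.ne' (Nat.dvd_one.mp ((Nat.dvd_add_left (dvd_mul_right p m)).mp h))
  rw [padicValNat.mul (pow_ne_zero _ hp.out.ne_zero) (by omega), padicValNat.prime_pow,
    padicValNat.eq_zero_of_not_dvd hcop, add_zero]

lemma valStep_pow_mul_one_add (s m : ℕ) :
    ∃ m', valStep p (p ^ (p ^ s + 1) * (1 + p * m)) = p ^ s * (1 + p * m') := by
  obtain ⟨δ, hδ⟩ := Nat.exists_eq_add_of_le (Nat.lt_pow_self (n := s) hp.out.one_lt).le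
  have hpos : 0 < p ^ (p ^ s + 1) * (1 + p * m) := by
    have := hp.out.pos
    positivity
  refine ⟨p ^ δ * (1 + p * m), ?_⟩
  calc valStep p (p ^ (p ^ s + 1) * (1 + p * m))
      = p ^ (s + δ + 1) * (1 + p * m) + p ^ s := by
        rw [valStep, padicValNat_pow_mul_one_add, ← hδ]
        omega
    _ = p ^ s * (1 + p * (p ^ δ * (1 + p * m))) := by ring

lemma iterate_valStep_tower (n i m : ℕ) :
    ∃ m', (valStep p)^[i] (p ^ tower p (n + i) * (1 + p * m)) = p ^ tower p n * (1 + p * m') := by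
  induction i generalizing m with
  | zero => exact ⟨m, rfl⟩
  | succ i ih =>
    obtain ⟨m₁, hm₁⟩ := valStep_pow_mul_one_add (p := p) (tower p (n + i)) m
    obtain ⟨m₂, hm₂⟩ := ih m₁
    exact ⟨m₂, by rw [Function.iterate_succ_apply, ← Nat.add_assoc, tower, hm₁, hm₂]⟩

lemma two_le_tower (k : ℕ) : 2 ≤ tower p k := by
  cases k with
  | zero => exact le_rfl
  | succ k => exact Nat.succ_le_succ (Nat.one_le_pow _ _ hp.out.pos)

lemma two_le_padicValNat_iterate_valStep {N i : ℕ} (hi : i ≤ N) :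
    2 ≤ padicValNat p ((valStep p)^[i] (p ^ tower p N)) := by
  obtain ⟨n, rfl⟩ : ∃ n, N = n + i := ⟨N - i, by omega⟩
  obtain ⟨m, hm⟩ := iterate_valStep_tower (p := p) n i 0
  rw [mul_zero, add_zero, mul_one] at hm
  rw [hm, padicValNat_pow_mul_one_add]
  exact two_le_tower n

theorem arbitrarily_many_jumps_general (p : ℕ) (hp : p.Prime) (N : ℕ) :
    ∃ x : ℤ, (∀ i, i ≤ N → (Dp p)^[i] x ≠ 0) ∧
      ∀ i, i < N → padicValInt p ((Dp p)^[i] x) < padicValInt p ((Dp p)^[i + 1] x) := by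
  have : Fact p.Prime := ⟨hp⟩
  set a := p ^ tower p N
  have hx : ((p : ℤ) ^ a) ≠ 0 := pow_ne_zero _ (by exact_mod_cast hp.ne_zero)
  have hva : padicValInt p ((p : ℤ) ^ a) = a := by
    rw [← Nat.cast_pow, padicValInt.of_nat, padicValNat.prime_pow]
  have hjump : ∀ i ≤ N, 2 ≤ padicValNat p ((valStep p)^[i] a) :=
    fun i hi => two_le_padicValNat_iterate_valStep hi
  have hiter : ∀ i ≤ N, (Dp p)^[i] ((p : ℤ) ^ a) ≠ 0 ∧
      padicValInt p ((Dp p)^[i] ((p : ℤ) ^ a)) = (valStep p)^[i] a := by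
    intro i hi
    have hne : ∀ j < i, (valStep p)^[j] (padicValInt p ((p : ℤ) ^ a)) ≠ 0 := fun j hj h0 => by
      have := hjump j (by omega)
      rw [← hva, h0, padicValNat_zero_right] at this
      omega
    simpa only [hva] using iterate_Dp hx hne
  refine ⟨(p : ℤ) ^ a, fun i hi => (hiter i hi).1, fun i hi => ?_⟩
  rw [(hiter i hi.le).2, (hiter (i + 1) hi).2, Function.iterate_succ_apply']
  exact lt_valStep (hjump i hi.le)

theorem arbitrarily_many_jumps (p : ℕ) (hp : p.Prime) (N : ℕ) (hN : 1 ≤ N) :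
    ∃ x : ℤ, (∀ i, i ≤ N → (Dp p)^[i] x ≠ 0) ∧
      ∀ i, i < N → padicValInt p ((Dp p)^[i] x) < padicValInt p ((Dp p)^[i + 1] x) :=
  arbitrarily_many_jumps_general p hp N
end

section
/- If a_0 is an integer with p ∤ a_0, then there is no integer x with D_p(x) = a_0·p^{p−1}; that is, a_0·p^{p−1} has no integral anti-partial derivative. -/
lemma padicValNat_eq_zero_of_lt {p k : ℕ} (hk : k < p) : padicValNat p k = 0 := by
  rcases Nat.eq_zero_or_pos k with rfl | hk0
  · exact padicValNat_zero_right p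
  · exact padicValNat.eq_zero_of_not_dvd (Nat.not_dvd_of_pos_of_lt hk0 hk)

section

variable {p : ℕ} [Fact p.Prime]

lemma add_padicValNat_ne_self (k : ℕ) : k + padicValNat p k ≠ p := by
  rcases lt_trichotomy k p with hlt | rfl | hgt
  · rw [padicValNat_eq_zero_of_lt hlt]
    omega
  · rw [padicValNat_self]
    omega
  · omega

lemma padicValInt_mul_prime_pow {a : ℤ} (ha : ¬ (p : ℤ) ∣ a) (n : ℕ) :
    padicValInt p (a * (p : ℤ) ^ n) = n := by
  have ha0 : a ≠ 0 := by rintro rfl; exact ha (dvd_zero _)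
  have hpn : (p : ℤ) ^ n ≠ 0 := pow_ne_zero _ (by exact_mod_cast (Fact.out : p.Prime).ne_zero)
  rw [padicValInt.mul ha0 hpn, padicValInt.eq_zero_of_not_dvd ha, ← Nat.cast_pow,
    padicValInt.of_nat, padicValNat.prime_pow, zero_add]

lemma padicValInt_Dp_add_one {x : ℤ} (h : Dp p x ≠ 0) :
    padicValInt p (Dp p x) + 1 = padicValInt p x + padicValNat p (padicValInt p x) := by
  have hq : x / p ≠ 0 := left_ne_zero_of_mul h
  have hk : (padicValInt p x : ℤ) ≠ 0 := right_ne_zero_of_mul h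
  have hdvd : (p : ℤ) ∣ x :=
    (dvd_pow_self _ (by exact_mod_cast hk)).trans (padicValInt_dvd x)
  have hx : padicValInt p x = padicValInt p (x / p) + 1 := by
    rw [← padicValInt_mul_eq_succ _ hq, Int.ediv_mul_cancel hdvd]
  rw [Dp, padicValInt.mul hq hk, padicValInt.of_nat, hx]
  omega

end

theorem no_antiderivative (p : ℕ) (hp : p.Prime) (a₀ : ℤ) (ha : ¬ (p : ℤ) ∣ a₀) :
    ¬ ∃ x : ℤ, Dp p x = a₀ * (p : ℤ) ^ (p - 1) := by
  have : Fact p.Prime := ⟨hp⟩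
  rintro ⟨x, hx⟩
  have hD : Dp p x ≠ 0 := hx ▸ mul_ne_zero (by rintro rfl; exact ha (dvd_zero _))
    (pow_ne_zero _ (by exact_mod_cast hp.ne_zero))
  have hval := padicValInt_Dp_add_one hD
  rw [hx, padicValInt_mul_prime_pow ha] at hval
  exact add_padicValNat_ne_self (p := p) (padicValInt p x) (by have := hp.one_le; omega)
end

section
/- Let y = a_0·p^{ℓ_0} with p ∤ a_0 and ℓ_0 > 0, and let x = a·p^{b·p^k} with p ∤ ab, b > 0, k ≥ 0, a ≠ 0. Then D_p(x) = y if and only if ab = a_0 and b·p^k + k − 1 = ℓ_0. -/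
/-!
On integers `u * p ^ m` with `p ∤ u`, `D_p` acts as the derivative `d/dp`: it sends `u * p ^ m`
to `m * u * p ^ (m - 1)`. For `x = a * p ^ (b * p ^ k)` this gives
`D_p(x) = a * b * p ^ (b * p ^ k + k - 1)` with `p ∤ a * b`, and the criterion is uniqueness of
the decomposition `unit * p ^ valuation`.
-/

section

variable {p : ℕ} [Fact p.Prime] {u v : ℤ}

theorem padicValInt_mul_pow_of_not_dvd_s10 (hu : ¬ (p : ℤ) ∣ u) (m : ℕ) :
    padicValInt p (u * (p : ℤ) ^ m) = m := by
  have hu0 : u ≠ 0 := by rintro rfl; exact hu (dvd_zero _)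
  induction m with
  | zero => simpa using padicValInt.eq_zero_of_not_dvd hu
  | succ m ih =>
    rw [pow_succ, ← mul_assoc,
      padicValInt_mul_eq_succ _ (mul_ne_zero hu0 (pow_ne_zero _ (NeZero.ne _))), ih]

theorem mul_pow_eq_mul_pow_iff_of_not_dvd (hu : ¬ (p : ℤ) ∣ u) (hv : ¬ (p : ℤ) ∣ v) {m n : ℕ} :
    u * (p : ℤ) ^ m = v * (p : ℤ) ^ n ↔ u = v ∧ m = n := by
  refine ⟨fun h ↦ ?_, by rintro ⟨rfl, rfl⟩; rfl⟩
  have hmn : m = n := by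
    simpa [padicValInt_mul_pow_of_not_dvd_s10 hu, padicValInt_mul_pow_of_not_dvd_s10 hv]
      using congrArg (padicValInt p) h
  subst hmn
  exact ⟨mul_right_cancel₀ (pow_ne_zero _ (NeZero.ne _)) h, rfl⟩

theorem Dp_mul_pow_of_not_dvd (hu : ¬ (p : ℤ) ∣ u) (m : ℕ) :
    Dp p (u * (p : ℤ) ^ m) = m * u * (p : ℤ) ^ (m - 1) := by
  rw [Dp, padicValInt_mul_pow_of_not_dvd_s10 hu]
  cases m with
  | zero => simp
  | succ m =>
    rw [pow_succ, ← mul_assoc, Int.mul_ediv_cancel _ (NeZero.ne _)]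
    simp only [add_tsub_cancel_right]
    ring

end

theorem antiderivative_criterion_general (p : ℕ) (hp : p.Prime)
    (a₀ : ℤ) (ℓ₀ : ℕ) (ha₀ : ¬ (p : ℤ) ∣ a₀)
    (a : ℤ) (b k : ℕ) (ha : ¬ (p : ℤ) ∣ a) (hbp : ¬ p ∣ b) :
    Dp p (a * (p : ℤ) ^ (b * p ^ k)) = a₀ * (p : ℤ) ^ ℓ₀ ↔
      (a * b = a₀ ∧ b * p ^ k + k - 1 = ℓ₀) := by
  have := Fact.mk hp
  have hab : ¬ (p : ℤ) ∣ a * b := by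
    rintro h
    rcases (Nat.prime_iff_prime_int.mp hp).dvd_or_dvd h with h | h
    exacts [ha h, hbp (Int.natCast_dvd_natCast.mp h)]
  have hn : 1 ≤ b * p ^ k :=
    Nat.one_le_iff_ne_zero.mpr (mul_ne_zero (by rintro rfl; exact hbp (dvd_zero p))
      (pow_ne_zero _ hp.ne_zero))
  have hDp : Dp p (a * (p : ℤ) ^ (b * p ^ k)) = a * b * (p : ℤ) ^ (b * p ^ k + k - 1) := by
    rw [Dp_mul_pow_of_not_dvd ha, show b * p ^ k + k - 1 = b * p ^ k - 1 + k by omega, pow_add]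
    push_cast
    ring
  rw [hDp, mul_pow_eq_mul_pow_iff_of_not_dvd hab ha₀]

theorem antiderivative_criterion (p : ℕ) (hp : p.Prime)
    (a₀ : ℤ) (ℓ₀ : ℕ) (ha₀ : ¬ (p : ℤ) ∣ a₀) (hℓ₀ : 0 < ℓ₀)
    (a : ℤ) (b k : ℕ) (ha0 : a ≠ 0) (ha : ¬ (p : ℤ) ∣ a) (hb : 0 < b) (hbp : ¬ p ∣ b) :
    Dp p (a * (p : ℤ) ^ (b * p ^ k)) = a₀ * (p : ℤ) ^ ℓ₀ ↔
      (a * b = a₀ ∧ b * p ^ k + k - 1 = ℓ₀) :=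
  antiderivative_criterion_general p hp a₀ ℓ₀ ha₀ a b k ha hbp
end

section
/- For every nonzero integer y, the set {x ∈ ℤ : D_p(x) = y} is finite. -/
theorem Int.finite_setOf_abs_ediv_le (N : ℤ) {d : ℤ} (hd : 0 < d) :
    {x : ℤ | |x / d| ≤ N}.Finite := by
  refine (Set.finite_Icc (-N * d) ((N + 1) * d)).subset fun x hx => ?_
  obtain ⟨hlo, hhi⟩ := abs_le.mp (show |x / d| ≤ N from hx)
  constructor
  · calc -N * d ≤ x / d * d := mul_le_mul_of_nonneg_right (by linarith) hd.le
      _ ≤ x := Int.ediv_mul_le x hd.ne'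
  · calc x ≤ (x / d + 1) * d := (Int.lt_ediv_add_one_mul_self x hd).le
      _ ≤ (N + 1) * d := mul_le_mul_of_nonneg_right (by linarith) hd.le

theorem abs_ediv_le_abs_Dp {p : ℕ} {x : ℤ} (h : Dp p x ≠ 0) : |x / p| ≤ |Dp p x| := by
  have hv : 1 ≤ (padicValInt p x : ℤ) := by
    have := (mul_ne_zero_iff.mp h).2
    omega
  calc |x / p| = |x / p| * 1 := (mul_one _).symm
    _ ≤ |x / p| * (padicValInt p x : ℤ) := mul_le_mul_of_nonneg_left hv (abs_nonneg _)
    _ = |Dp p x| := by rw [Dp, abs_mul, Nat.abs_cast]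

theorem finitely_many_antiderivatives_general (p : ℕ) (y : ℤ) (hy : y ≠ 0) :
    {x : ℤ | Dp p x = y}.Finite := by
  rcases Nat.eq_zero_or_pos p with rfl | hp
  · simp [Dp, eq_comm, hy] -- `x / 0 = 0` in `ℤ`, so `Dp 0` vanishes
  refine (Int.finite_setOf_abs_ediv_le |y| (Int.natCast_pos.mpr hp)).subset fun x hx => ?_
  exact (hx : Dp p x = y) ▸ abs_ediv_le_abs_Dp (hx ▸ hy)

theorem finitely_many_antiderivatives (p : ℕ) (hp : p.Prime) (y : ℤ) (hy : y ≠ 0) :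
    {x : ℤ | Dp p x = y}.Finite :=
  finitely_many_antiderivatives_general p y hy
end

section
/- For every positive integer n, there exist infinitely many integers x_0 such that the set {x ∈ ℤ : D_p(x) = D_p(x_0)} has exactly n elements. -/
/-!
Write `v = v_p`. For `x = p^k m` with `k ≥ 1` and `p ∤ m` one has `D_p(x) = p^(k-1) m k`, whose
valuation is `k - 1 + v(k)` and whose prime-to-`p` part is `m` times that of `k`. Hence the positive
value `p^(N-1) w` with `p ∤ w` is attained once for every exponent `k ≥ 1` with `k + v(k) = N`
whose prime-to-`p` part divides `w`; taking for `w` the product of all those parts, the fiber is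
in bijection with `{k ≥ 1 | k + v(k) = N}`.

It remains to find infinitely many `N` with exactly `n` such `k`, i.e. with exactly `n` offsets
`j < N` satisfying `v(N - j) = j`. Along the chain `c₀ = p^s`, `c_{i+1} = c_i + p^(c_i)` (`s ≥ 1`)
the top `N = c_n` has exactly the offsets `c₀, …, c_{n-1}`: an offset strictly between `c_i` and
`c_{i+1}` would force `p^j ∣ c_{i+1} - j < p^j`.
-/

open Finset

section PrimePowMul

variable {p : ℕ}

theorem Nat.Prime.pow_mul_eq_pow_mul_iff (hp : p.Prime) {a b c d : ℕ} (hb : ¬p ∣ b)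
    (hd : ¬p ∣ d) : p ^ a * b = p ^ c * d ↔ a = c ∧ b = d := by
  refine ⟨fun h => ?_, fun ⟨hac, hbd⟩ => hac ▸ hbd ▸ rfl⟩
  have hbd : b = d := by
    rw [← Nat.ordCompl_pow_mul_of_not_dvd a hp hb, h, Nat.ordCompl_pow_mul_of_not_dvd c hp hd]
  subst hbd
  have hb0 : 0 < b := Nat.pos_of_ne_zero fun h => hb (h ▸ dvd_zero p)
  exact ⟨Nat.pow_right_injective hp.two_le (Nat.eq_of_mul_eq_mul_right hb0 h), rfl⟩

theorem Nat.Prime.factorization_pow_mul (hp : p.Prime) {k m : ℕ} (hm : ¬p ∣ m) :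
    (p ^ k * m).factorization p = k := by
  have hm0 : m ≠ 0 := fun h => hm (h ▸ dvd_zero p)
  rw [Nat.factorization_mul (pow_ne_zero k hp.ne_zero) hm0]
  simp [hp.factorization_pow, Nat.factorization_eq_zero_of_not_dvd hm]

end PrimePowMul

section Fibers

variable {p : ℕ}

theorem Dp_natCast_pow_mul (hp : p.Prime) {k m : ℕ} (hk : 0 < k) (hm : ¬p ∣ m) :
    Dp p ((p ^ k * m : ℕ) : ℤ) = ((p ^ (k - 1) * m * k : ℕ) : ℤ) := by
  have hval : padicValInt p ((p ^ k * m : ℕ) : ℤ) = k := by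
    rw [padicValInt.of_nat, ← Nat.factorization_def _ hp, hp.factorization_pow_mul hm]
  obtain ⟨k, rfl⟩ : ∃ k', k = k' + 1 := ⟨k - 1, by omega⟩
  rw [Dp, hval, Nat.add_sub_cancel, pow_succ', mul_assoc]
  push_cast
  rw [Int.mul_ediv_cancel_left _ (by exact_mod_cast hp.ne_zero)]

theorem exists_eq_pow_mul_of_Dp_pos (hp : p.Prime) {x : ℤ} (hx : 0 < Dp p x) :
    ∃ k m : ℕ, 0 < k ∧ ¬p ∣ m ∧ x = ((p ^ k * m : ℕ) : ℤ) := by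
  have hx0 : 0 < x := by
    by_contra! h
    have hdiv : x / p ≤ 0 := Int.ediv_nonpos_of_nonpos_of_neg h (by exact_mod_cast hp.pos)
    exact hx.not_ge (mul_nonpos_of_nonpos_of_nonneg hdiv (Nat.cast_nonneg _))
  lift x to ℕ using hx0.le
  obtain ⟨k, m, hm, rfl⟩ := Nat.exists_eq_pow_mul_and_not_dvd (by omega : x ≠ 0) p hp.ne_one
  refine ⟨k, m, Nat.pos_of_ne_zero ?_, hm, rfl⟩
  rintro rfl
  simp [Dp, padicValNat.eq_zero_of_not_dvd hm] at hx

theorem Dp_eq_pow_mul_iff (hp : p.Prime) {N w : ℕ} (hN : 0 < N) (hw : ¬p ∣ w) {x : ℤ} :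
    Dp p x = ((p ^ (N - 1) * w : ℕ) : ℤ) ↔
      ∃ k m : ℕ, 0 < k ∧ k + k.factorization p = N ∧ m * ordCompl[p] k = w ∧
        x = ((p ^ k * m : ℕ) : ℤ) := by
  have split : ∀ k m : ℕ, p ^ (k - 1) * m * k =
      p ^ (k - 1 + k.factorization p) * (m * ordCompl[p] k) := fun k m =>
    calc p ^ (k - 1) * m * k
        = p ^ (k - 1) * m * (p ^ k.factorization p * ordCompl[p] k) := by
          rw [Nat.ordProj_mul_ordCompl_eq_self]
      _ = p ^ (k - 1 + k.factorization p) * (m * ordCompl[p] k) := by ring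
  have unit : ∀ {k m : ℕ}, 0 < k → ¬p ∣ m → ¬p ∣ m * ordCompl[p] k := fun hk hm =>
    hp.prime.not_dvd_mul hm (Nat.not_dvd_ordCompl hp hk.ne')
  constructor
  · intro hx
    have hw0 : w ≠ 0 := fun h => hw (h ▸ dvd_zero p)
    obtain ⟨k, m, hk, hm, rfl⟩ := exists_eq_pow_mul_of_Dp_pos hp
      (by rw [hx]; exact_mod_cast Nat.pos_of_ne_zero (mul_ne_zero (pow_ne_zero _ hp.ne_zero) hw0))
    rw [Dp_natCast_pow_mul hp hk hm, Nat.cast_inj, split,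
      hp.pow_mul_eq_pow_mul_iff (unit hk hm) hw] at hx
    exact ⟨k, m, hk, by omega, hx.2, rfl⟩
  · rintro ⟨k, m, hk, hkN, hmw, rfl⟩
    have hm : ¬p ∣ m := fun h => hw (hmw ▸ h.mul_right _)
    rw [Dp_natCast_pow_mul hp hk hm, split, hmw, show k - 1 + k.factorization p = N - 1 by omega]

/-- The exponents `k` for which `D_p(p^k m)`, `p ∤ m`, has valuation `N - 1`. -/
def levelExponents (p N : ℕ) : Finset ℕ :=
  (Icc 1 N).filter fun k => k + k.factorization p = N

def levelUnit (p N : ℕ) : ℕ :=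
  ∏ k ∈ levelExponents p N, ordCompl[p] k

def levelValue (p N : ℕ) : ℕ :=
  p ^ (N - 1) * levelUnit p N

theorem mem_levelExponents {N k : ℕ} :
    k ∈ levelExponents p N ↔ 0 < k ∧ k + k.factorization p = N := by
  simp only [levelExponents, mem_filter, mem_Icc]
  omega

theorem not_dvd_levelUnit (hp : p.Prime) (N : ℕ) : ¬p ∣ levelUnit p N := by
  rw [levelUnit, Prime.dvd_finsetProd_iff hp.prime]
  rintro ⟨k, hk, hdvd⟩
  exact Nat.not_dvd_ordCompl hp (mem_levelExponents.mp hk).1.ne' hdvd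

theorem levelValue_inj (hp : p.Prime) {N N' : ℕ} (hN : 0 < N) (hN' : 0 < N') :
    levelValue p N = levelValue p N' ↔ N = N' := by
  refine ⟨fun h => ?_, congrArg _⟩
  have := ((hp.pow_mul_eq_pow_mul_iff (not_dvd_levelUnit hp N) (not_dvd_levelUnit hp N')).mp h).1
  omega

theorem ncard_Dp_eq_levelValue (hp : p.Prime) {N : ℕ} (hN : 0 < N) :
    {x : ℤ | Dp p x = levelValue p N}.ncard = (levelExponents p N).card := by
  have hcompl : ∀ k ∈ levelExponents p N, ordCompl[p] k ∣ levelUnit p N := fun k hk =>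
    dvd_prod_of_mem _ hk
  have hcofactor : ∀ k ∈ levelExponents p N, ¬p ∣ levelUnit p N / ordCompl[p] k := fun k hk h =>
    not_dvd_levelUnit hp N (h.trans (Nat.div_dvd_of_dvd (hcompl k hk)))
  have hfiber : {x : ℤ | Dp p x = levelValue p N} =
      (levelExponents p N).image fun k => ((p ^ k * (levelUnit p N / ordCompl[p] k) : ℕ) : ℤ) := by
    ext x
    simp only [Set.mem_ofPred_eq, coe_image, Set.mem_image, mem_coe, levelValue,
      Dp_eq_pow_mul_iff hp hN (not_dvd_levelUnit hp N)]
    constructor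
    · rintro ⟨k, m, hk, hkN, hmw, rfl⟩
      have hkN' : k ∈ levelExponents p N := mem_levelExponents.mpr ⟨hk, hkN⟩
      refine ⟨k, hkN', ?_⟩
      rw [← hmw, Nat.mul_div_cancel _ (Nat.ordCompl_pos p hk.ne')]
    · rintro ⟨k, hk, rfl⟩
      obtain ⟨hk0, hkN⟩ := mem_levelExponents.mp hk
      exact ⟨k, _, hk0, hkN, Nat.div_mul_cancel (hcompl k hk), rfl⟩
  rw [hfiber, Set.ncard_coe_finset]
  refine card_image_of_injOn fun k hk k' hk' h => ?_
  rw [Nat.cast_inj] at h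
  exact ((hp.pow_mul_eq_pow_mul_iff (hcofactor k hk) (hcofactor k' hk')).mp h).1

end Fibers

section Chain

def chain (p s : ℕ) : ℕ → ℕ
  | 0 => p ^ s
  | i + 1 => chain p s i + p ^ chain p s i

variable {p s : ℕ}

theorem chain_succ (i : ℕ) : chain p s (i + 1) = chain p s i + p ^ chain p s i := rfl

theorem chain_pos (hp : 0 < p) (n : ℕ) : 0 < chain p s n := by
  cases n with
  | zero => exact pow_pos hp s
  | succ n => exact Nat.add_pos_right _ (pow_pos hp _)

theorem chain_strictMono (hp : 1 < p) : StrictMono (chain p s) :=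
  strictMono_nat_of_lt_succ fun i => Nat.lt_add_of_pos_right (pow_pos (by omega) _)

theorem chain_strictMono_left (hp : 1 < p) (n : ℕ) : StrictMono fun s => chain p s n := by
  intro s t hst
  induction n with
  | zero => exact Nat.pow_lt_pow_right hp hst
  | succ n ih => exact Nat.add_lt_add ih (Nat.pow_lt_pow_right hp ih)

theorem pow_chain_dvd_chain_sub (hp : 1 < p) {i n : ℕ} (hin : i ≤ n) :
    p ^ chain p s i ∣ chain p s n - chain p s i := by
  induction n, hin using Nat.le_induction with
  | base => simp
  | succ n hin ih =>
    have hle := (chain_strictMono (s := s) hp).monotone hin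
    rw [chain_succ, Nat.sub_add_comm hle]
    exact dvd_add ih (pow_dvd_pow p hle)

theorem pow_succ_chain_not_dvd (hp : 1 < p) {i n : ℕ} (hin : i < n) :
    ¬p ^ (chain p s i + 1) ∣ chain p s n - chain p s i := by
  have hlt := chain_strictMono (s := s) hp hin
  have hnext : chain p s n - chain p s i = p ^ chain p s i + (chain p s n - chain p s (i + 1)) := by
    have := (chain_strictMono (s := s) hp).monotone (hin : i + 1 ≤ n)
    rw [chain_succ] at this ⊢
    omega
  have htail : p ^ (chain p s i + 1) ∣ chain p s n - chain p s (i + 1) :=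
    (pow_dvd_pow p (chain_strictMono hp i.lt_succ_self)).trans
      (pow_chain_dvd_chain_sub hp (hin : i + 1 ≤ n))
  rw [hnext, Nat.dvd_add_left htail, Nat.pow_dvd_pow_iff_le_right hp]
  omega

theorem factorization_chain_sub (hp : p.Prime) {i n : ℕ} (hin : i < n) :
    (chain p s n - chain p s i).factorization p = chain p s i := by
  have hne : chain p s n - chain p s i ≠ 0 := by
    have := chain_strictMono (s := s) hp.one_lt hin
    omega
  refine le_antisymm ?_ ((hp.pow_dvd_iff_le_factorization hne).mp
    (pow_chain_dvd_chain_sub hp.one_lt hin.le))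
  by_contra! h
  exact pow_succ_chain_not_dvd hp.one_lt hin ((hp.pow_dvd_iff_le_factorization hne).mpr h)

theorem not_pow_dvd_pow_sub_self (hp : 1 < p) {j : ℕ} (hj : 0 < j) (hjs : j < p ^ s) :
    ¬p ^ j ∣ p ^ s - j := by
  intro h
  rcases le_or_gt j s with hjs' | hsj
  · have hdvd : p ^ j ∣ j := (Nat.dvd_sub_iff_right hjs.le (pow_dvd_pow p hjs')).mp h
    exact (Nat.le_of_dvd hj hdvd).not_gt (Nat.lt_pow_self hp)
  · have hdvd : p ^ s ∣ j :=
      (Nat.dvd_sub_iff_right hjs.le dvd_rfl).mp ((pow_dvd_pow p hsj.le).trans h)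
    exact (Nat.le_of_dvd hj hdvd).not_gt hjs

theorem chain_zero_le_of_pow_dvd (hp : 1 < p) (hs : 0 < s) {n j : ℕ}
    (hdvd : p ^ j ∣ chain p s n - j) (hndvd : ¬p ^ (j + 1) ∣ chain p s n - j) :
    chain p s 0 ≤ j := by
  have hbase := pow_chain_dvd_chain_sub (s := s) hp (Nat.zero_le n)
  have hbase_le := (chain_strictMono (s := s) hp).monotone (Nat.zero_le n)
  by_contra! hj0
  rcases Nat.eq_zero_or_pos j with rfl | hjpos
  · -- `p` divides both `c₀ = p^s` and `c_n - c₀`, hence `c_n - 0`.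
    apply hndvd
    rw [zero_add, pow_one, Nat.sub_zero, ← Nat.sub_add_cancel hbase_le]
    exact dvd_add ((dvd_pow_self p (chain_pos (by omega) 0).ne').trans hbase)
      (dvd_pow_self p hs.ne')
  · refine not_pow_dvd_pow_sub_self hp hjpos hj0 ?_
    have := Nat.dvd_sub hdvd ((pow_dvd_pow p hj0.le).trans hbase)
    rwa [show chain p s n - j - (chain p s n - chain p s 0) = chain p s 0 - j by omega] at this

theorem not_pow_dvd_chain_sub_of_lt_of_lt (hp : 1 < p) {i n j : ℕ} (hin : i < n)
    (hij : chain p s i < j) (hji : j < chain p s (i + 1)) : ¬p ^ j ∣ chain p s n - j := by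
  intro hdvd
  have hgap : p ^ j ∣ chain p s (i + 1) - j := by
    have hnext := (pow_dvd_pow p hji.le).trans (pow_chain_dvd_chain_sub (s := s) hp hin)
    have hle : chain p s (i + 1) ≤ chain p s n := (chain_strictMono hp).monotone hin
    have := Nat.dvd_sub hdvd hnext
    rwa [show chain p s n - j - (chain p s n - chain p s (i + 1)) = chain p s (i + 1) - j by
      omega] at this
  have hlt : chain p s (i + 1) - j < p ^ j := by
    have := Nat.pow_lt_pow_right hp hij
    have := chain_succ (p := p) (s := s) i
    omega
  exact hlt.not_ge (Nat.le_of_dvd (by omega) hgap)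

theorem exists_chain_eq (hp : 1 < p) (hs : 0 < s) {n j : ℕ} (hj : j < chain p s n)
    (hdvd : p ^ j ∣ chain p s n - j) (hndvd : ¬p ^ (j + 1) ∣ chain p s n - j) :
    ∃ i < n, chain p s i = j := by
  have hmono := chain_strictMono (s := s) hp
  obtain ⟨i, hij, hji⟩ : ∃ i, chain p s i < j + 1 ∧ j + 1 ≤ chain p s (i + 1) :=
    hmono.exists_between_of_tendsto_atTop hmono.tendsto_atTop
      (Nat.lt_succ_of_le (chain_zero_le_of_pow_dvd hp hs hdvd hndvd))
  have hin : i < n := hmono.lt_iff_lt.mp (by omega)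
  refine ⟨i, hin, ?_⟩
  by_contra hne
  exact not_pow_dvd_chain_sub_of_lt_of_lt hp hin (by omega) hji hdvd

theorem levelExponents_chain (hp : p.Prime) (hs : 0 < s) (n : ℕ) :
    levelExponents p (chain p s n) = (range n).image fun i => chain p s n - chain p s i := by
  ext k
  simp only [mem_levelExponents, mem_image, mem_range]
  constructor
  · rintro ⟨hk, hkN⟩
    have hkN' : chain p s n - k.factorization p = k := by omega
    obtain ⟨i, hin, hi⟩ := exists_chain_eq hp.one_lt hs (n := n) (j := k.factorization p)
      (by omega) (by rw [hkN']; exact Nat.ordProj_dvd k p)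
      (by rw [hkN']; exact Nat.pow_succ_factorization_not_dvd hk.ne' hp)
    exact ⟨i, hin, by omega⟩
  · rintro ⟨i, hin, rfl⟩
    have hlt := chain_strictMono (s := s) hp.one_lt hin
    rw [factorization_chain_sub hp hin]
    omega

theorem card_levelExponents_chain (hp : p.Prime) (hs : 0 < s) (n : ℕ) :
    (levelExponents p (chain p s n)).card = n := by
  rw [levelExponents_chain hp hs, card_image_of_injOn, card_range]
  intro i hi i' hi' h
  have hlt := chain_strictMono (s := s) hp.one_lt (mem_range.mp hi)
  have hlt' := chain_strictMono (s := s) hp.one_lt (mem_range.mp hi')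
  exact (chain_strictMono (s := s) hp.one_lt).injective (by simp only at h; omega)

end Chain

theorem infinitely_many_with_n_antiderivatives (p : ℕ) (hp : p.Prime) (n : ℕ) (hn : 0 < n) :
    {x₀ : ℤ | {x : ℤ | Dp p x = Dp p x₀}.ncard = n}.Infinite := by
  set N : ℕ → ℕ := fun s => chain p (s + 1) n
  have hN : ∀ s, 0 < N s := fun s => chain_pos hp.pos n
  have hfiber : ∀ s, {x : ℤ | Dp p x = levelValue p (N s)}.ncard = n := fun s => by
    rw [ncard_Dp_eq_levelValue hp (hN s), card_levelExponents_chain hp s.succ_pos]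
  have hvalues : (Set.range fun s => (levelValue p (N s) : ℤ)).Infinite :=
    Set.infinite_range_of_injective fun s t h =>
      Nat.succ_injective <| (chain_strictMono_left hp.one_lt n).injective <|
        (levelValue_inj hp (hN s) (hN t)).mp (by exact_mod_cast h)
  refine Set.Infinite.of_image (Dp p) (hvalues.mono ?_)
  rintro _ ⟨s, rfl⟩
  obtain ⟨x₀, hx₀ : Dp p x₀ = levelValue p (N s)⟩ :=
    Set.nonempty_of_ncard_ne_zero (hfiber s ▸ hn.ne')
  exact ⟨x₀, show _ = n by rw [hx₀]; exact hfiber s, hx₀⟩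
end
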